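/- Let k ≥ 3 and n ≥ k+3 be integers, and let x and y be adjacent vertices of the Johnson graph J(n,k). Then the set S = (N(x) ∪ N(y)) − {x, y} of all neighbours of x or y other than x and y themselves has cardinality (2k−1)(n−k)−k, deleting S disconnects J(n,k), and J(n,k)−S has no isolated vertex (so S is a super vertex-cut). -/

import Mathlib

open SimpleGraph Finset

/-- Vertex type of the Johnson graph `J(n,k)`: the `k`-element subsets of `[n]`. -/
abbrev JV (n k : ℕ) := {s : Finset (Fin n) // s.card = k}

/-- The Johnson graph `J(n,k)`: two `k`-subsets are adjacent iff their
intersection has exactly `k-1` elements. -/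
def johnsonGraph (n k : ℕ) : SimpleGraph (JV n k) where
  Adj u v := u ≠ v ∧ (u.val ∩ v.val).card = k - 1
  symm := by
    constructor
    intro u v h
    exact ⟨h.1.symm, by rw [Finset.inter_comm]; exact h.2⟩
  loopless := by
    constructor
    intro u h
    exact h.1 rfl

/-- `S` is a vertex-cut of `G` if deleting `S` disconnects `G`. -/
def IsVertexCut {V : Type*} (G : SimpleGraph V) (S : Set V) : Prop :=
  ¬ (G.induce Sᶜ).Preconnected

/-- `S` is a super vertex-cut of `G` if deleting `S` disconnects `G` and
leaves no isolated vertex. -/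
def IsSuperVertexCut {V : Type*} (G : SimpleGraph V) (S : Set V) : Prop :=
  IsVertexCut G S ∧ ∀ v : ↥Sᶜ, ∃ w : ↥Sᶜ, (G.induce Sᶜ).Adj v w

/-- The super-connectivity of `G`: the least cardinality of a super vertex-cut,
or `⊤` if none exists. -/
noncomputable def superConnectivity {V : Type*} [Fintype V] (G : SimpleGraph V) : ℕ∞ :=
  sInf {m : ℕ∞ | ∃ S : Finset V, IsSuperVertexCut G ↑S ∧ (S.card : ℕ∞) = m}

/-- `S` is a minimum super vertex-cut of `G`. -/
def IsMinSuperVertexCut {V : Type*} [Fintype V] (G : SimpleGraph V) (S : Finset V) : Prop :=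
  IsSuperVertexCut G ↑S ∧ ∀ T : Finset V, IsSuperVertexCut G ↑T → S.card ≤ T.card

/-!
Two `k`-sets are adjacent in `J(n,k)` exactly when one arises from the other by exchanging a
single element, so every vertex has `k(n-k)` neighbours, and adjacent `x = A ∪ {a}`,
`y = A ∪ {b}` have `n-2` common neighbours: exchange `a` for anything but `b`, or anything of
`A` for `b`. Inclusion–exclusion gives `|S|`.

All neighbours of `x` and `y` other than `x, y` lie in `S`, so `{x, y}` is a component of
`J(n,k) - S`; since `n ≥ k+3` some vertex meets `x ∪ y` in at most `k-2` points and lies in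
another one. A vertex `v` outside `S ∪ {x, y}` meets `x` and `y` in at most `k-2` points each.
Exchanging a point of `v ∩ x` (needed only if `|v ∩ x| = k-2`, and then `v ∩ x ≠ ∅` as
`k ≥ 3`) for a point outside `v ∪ y` (needed only if `|v ∩ y| = k-2`, and then
`|v ∪ y| = k+2 < n`) gives a neighbour of `v` that is again outside `S ∪ {x, y}`.
-/

namespace Finset

variable {α : Type*} [DecidableEq α]

theorem card_insert_erase_inter_add {s : Finset α} {a b : α} (ha : a ∈ s) (hb : b ∉ s)
    (t : Finset α) :
    #(insert b (s.erase a) ∩ t) + (if a ∈ t then 1 else 0) =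
      #(s ∩ t) + (if b ∈ t then 1 else 0) := by
  have hb' : b ∉ s.erase a ∩ t := fun h => hb (mem_of_mem_erase (mem_inter.1 h).1)
  have herase : #(s.erase a ∩ t) + (if a ∈ t then 1 else 0) = #(s ∩ t) := by
    rw [erase_inter]
    split_ifs with hat
    · exact card_erase_add_one (mem_inter.2 ⟨ha, hat⟩)
    · rw [erase_eq_of_notMem fun h => hat (mem_inter.1 h).2, add_zero]
  by_cases hbt : b ∈ t
  · rw [insert_inter_of_mem hbt, card_insert_of_notMem hb', if_pos hbt]
    omega
  · rw [insert_inter_of_notMem hbt, if_neg hbt]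
    omega

theorem card_insert_erase_inter_le {s t : Finset α} {a b : α} (ha : a ∈ s) (hb : b ∉ s)
    (h : a ∈ t ∨ b ∉ t) : #(insert b (s.erase a) ∩ t) ≤ #(s ∩ t) := by
  have := card_insert_erase_inter_add ha hb t
  split_ifs at this <;> first | omega | tauto

theorem card_insert_erase_inter_le_succ {s t : Finset α} {a b : α} (ha : a ∈ s) (hb : b ∉ s) :
    #(insert b (s.erase a) ∩ t) ≤ #(s ∩ t) + 1 := by
  have := card_insert_erase_inter_add ha hb t
  split_ifs at this <;> omega

theorem card_insert_erase {s : Finset α} {a b : α} (ha : a ∈ s) (hb : b ∉ s) :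
    #(insert b (s.erase a)) = #s := by
  simpa [inter_self, ha, hb] using card_insert_erase_inter_add ha hb s

variable [Fintype α]

def exchanges (s : Finset α) : Finset (Finset α) :=
  (s ×ˢ sᶜ).image fun p => insert p.2 (s.erase p.1)

theorem mem_exchanges {s t : Finset α} :
    t ∈ s.exchanges ↔ ∃ a ∈ s, ∃ b ∉ s, insert b (s.erase a) = t := by
  simp [exchanges, and_assoc]

theorem card_of_mem_exchanges {s t : Finset α} (h : t ∈ s.exchanges) : #t = #s := by
  obtain ⟨a, ha, b, hb, rfl⟩ := mem_exchanges.1 h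
  exact card_insert_erase ha hb

theorem insert_erase_injOn (s : Finset α) :
    Set.InjOn (fun p : α × α => insert p.2 (s.erase p.1)) ↑(s ×ˢ sᶜ) := by
  rintro ⟨a, b⟩ hab ⟨a', b'⟩ hab' (h : insert b (s.erase a) = insert b' (s.erase a'))
  simp only [coe_product, coe_compl, Set.mem_prod, mem_coe, Set.mem_compl_iff] at hab hab'
  obtain rfl : a = a' := by
    by_contra hne
    have : a ∈ insert b (s.erase a) := h ▸ mem_insert_of_mem (mem_erase.2 ⟨hne, hab.1⟩)
    rw [mem_insert, mem_erase] at this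
    exact this.elim (fun hab'' => hab.2 (hab'' ▸ hab.1)) fun h => h.1 rfl
  have : b ∈ insert b' (s.erase a) := h ▸ mem_insert_self b _
  rw [mem_insert] at this
  exact Prod.ext rfl (this.resolve_right fun h => hab.2 (mem_of_mem_erase h))

theorem card_exchanges (s : Finset α) : #s.exchanges = #s * (Fintype.card α - #s) := by
  rw [exchanges, card_image_of_injOn (insert_erase_injOn s), card_product, card_compl]

theorem mem_exchanges_iff {s t : Finset α} (hst : #t = #s) :
    t ∈ s.exchanges ↔ s ≠ t ∧ #(s ∩ t) = #s - 1 := by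
  constructor
  · intro h
    obtain ⟨a, ha, b, hb, rfl⟩ := mem_exchanges.1 h
    refine ⟨fun h => hb (h ▸ mem_insert_self b _), ?_⟩
    have := card_insert_erase_inter_add ha hb s
    simp only [ha, hb, if_true, if_false, inter_self] at this
    rw [inter_comm]; omega
  · rintro ⟨hne, hcard⟩
    have hs := card_sdiff_add_card_inter s t
    have ht := card_sdiff_add_card_inter t s
    rw [inter_comm] at ht
    have hpos : 0 < #s := by
      by_contra h0
      exact hne (by rw [card_eq_zero.1 (by omega : #s = 0), card_eq_zero.1 (by omega : #t = 0)])
    obtain ⟨a, ha⟩ := card_eq_one.1 (by omega : #(s \ t) = 1)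
    obtain ⟨b, hb⟩ := card_eq_one.1 (by omega : #(t \ s) = 1)
    have has : a ∈ s \ t := ha ▸ mem_singleton_self a
    have hbs : b ∈ t \ s := hb ▸ mem_singleton_self b
    refine mem_exchanges.2 ⟨a, (mem_sdiff.1 has).1, b, (mem_sdiff.1 hbs).2, ?_⟩
    rw [← sdiff_singleton_eq_erase, ← ha, sdiff_sdiff_self_left, insert_eq, ← hb, inter_comm,
      sdiff_union_inter]

theorem insert_erase_mem_exchanges_insert_erase {s : Finset α} {a b c d : α} (ha : a ∈ s)
    (hb : b ∉ s) (hc : c ∈ s) (hd : d ∉ s) :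
    insert d (s.erase c) ∈ (insert b (s.erase a)).exchanges ↔
      c = a ∧ d ≠ b ∨ c ≠ a ∧ d = b := by
  have hy : #(s ∩ insert b (s.erase a)) = #s - 1 :=
    ((mem_exchanges_iff (card_insert_erase ha hb)).1 (mem_exchanges.2 ⟨a, ha, b, hb, rfl⟩)).2
  have hcard := card_insert_erase_inter_add hc hd (insert b (s.erase a))
  have hne : insert b (s.erase a) ≠ insert d (s.erase c) ↔ ¬(c = a ∧ d = b) := by
    have := (insert_erase_injOn s).eq_iff (x := (a, b)) (y := (c, d)) (by simp [ha, hb])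
      (by simp [hc, hd])
    simp only at this
    rw [ne_eq, this, Prod.mk.injEq, eq_comm (a := a), eq_comm (a := b)]
  have hcy : c ∈ insert b (s.erase a) ↔ c ≠ a := by
    have hcb : c ≠ b := fun h => hb (h ▸ hc)
    simp [hc, hcb]
  have hdy : d ∈ insert b (s.erase a) ↔ d = b := by
    rw [mem_insert, or_iff_left fun h => hd (mem_of_mem_erase h)]
  have hpos : 0 < #s := card_pos.2 ⟨a, ha⟩
  simp only [hcy, hdy, hy] at hcard
  rw [inter_comm] at hcard
  rw [mem_exchanges_iff (by rw [card_insert_erase hc hd, card_insert_erase ha hb]), hne,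
    card_insert_erase ha hb]
  generalize #(insert b (s.erase a) ∩ insert d (s.erase c)) = m at hcard ⊢
  by_cases hca : c = a <;> by_cases hdb : d = b <;> simp [hca, hdb] at hcard ⊢ <;> omega

theorem card_exchanges_inter_exchanges {s : Finset α} {a b : α} (ha : a ∈ s) (hb : b ∉ s) :
    #(s.exchanges ∩ (insert b (s.erase a)).exchanges) = Fintype.card α - 2 := by
  have hfilter : (s ×ˢ sᶜ).filter (fun p => insert p.2 (s.erase p.1) ∈
      (insert b (s.erase a)).exchanges) = {a} ×ˢ sᶜ.erase b ∪ s.erase a ×ˢ {b} := by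
    ext ⟨c, d⟩
    simp only [mem_filter, mem_product, mem_compl, mem_union, mem_singleton, mem_erase]
    constructor
    · rintro ⟨⟨hc, hd⟩, h⟩
      rcases (insert_erase_mem_exchanges_insert_erase ha hb hc hd).1 h with h | h <;> tauto
    · rintro (⟨rfl, hdb, hd⟩ | ⟨⟨hca, hc⟩, rfl⟩)
      · exact ⟨⟨ha, hd⟩,
          (insert_erase_mem_exchanges_insert_erase ha hb ha hd).2 (.inl ⟨rfl, hdb⟩)⟩
      · exact ⟨⟨hc, hb⟩,
          (insert_erase_mem_exchanges_insert_erase ha hb hc hb).2 (.inr ⟨hca, rfl⟩)⟩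
  have hdisj : Disjoint ({a} ×ˢ sᶜ.erase b) (s.erase a ×ˢ {b}) :=
    disjoint_product.2 (.inl (by simp))
  have hbs : b ∈ sᶜ := mem_compl.2 hb
  have hpos : 0 < #s := card_pos.2 ⟨a, ha⟩
  have hlt : #s < Fintype.card α := card_lt_univ_of_notMem hb
  rw [← filter_mem_eq_inter, exchanges.eq_1 s, filter_image,
    card_image_of_injOn ((insert_erase_injOn s).mono (coe_subset.2 (filter_subset _ _))),
    hfilter, card_union_of_disjoint hdisj, card_product, card_product, card_singleton,
    card_singleton, card_erase_of_mem hbs, card_erase_of_mem ha, card_compl]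
  omega

theorem exists_card_eq_card_inter_add_le {u : Finset α} {k m : ℕ} (hm : m ≤ k)
    (hk : k ≤ Fintype.card α) (hu : m + #u ≤ Fintype.card α) :
    ∃ z : Finset α, #z = k ∧ #(z ∩ u) + m ≤ k := by
  obtain ⟨P, hPu, hP⟩ := exists_subset_card_eq (s := uᶜ) (n := m) (by rw [card_compl]; omega)
  obtain ⟨z, hPz, -, hz⟩ :=
    exists_subsuperset_card_eq (subset_univ P) (hP ▸ hm) (by rwa [card_univ])
  have hsub : z ∩ u ⊆ z \ P := fun c hc =>
    mem_sdiff.2 ⟨(mem_inter.1 hc).1, fun hcP => mem_compl.1 (hPu hcP) (mem_inter.1 hc).2⟩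
  have := card_le_card hsub
  rw [card_sdiff_of_subset hPz] at this
  exact ⟨z, hz, by omega⟩

theorem exists_insert_erase_card_inter_add_le {v x y : Finset α} {k : ℕ} (hv : #v = k)
    (hy : #y = k) (hk : 3 ≤ k) (hn : k + 3 ≤ Fintype.card α) (hvx : #(v ∩ x) + 2 ≤ k)
    (hvy : #(v ∩ y) + 2 ≤ k) :
    ∃ a ∈ v, ∃ b ∉ v,
      #(insert b (v.erase a) ∩ x) + 2 ≤ k ∧ #(insert b (v.erase a) ∩ y) + 2 ≤ k := by
  obtain ⟨a, ha, hax⟩ : ∃ a ∈ v, a ∈ x ∨ #(v ∩ x) + 3 ≤ k := by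
    by_cases h : #(v ∩ x) + 3 ≤ k
    · obtain ⟨a, ha⟩ := card_pos.1 (by omega : 0 < #v)
      exact ⟨a, ha, .inr h⟩
    · obtain ⟨a, ha⟩ := card_pos.1 (by omega : 0 < #(v ∩ x))
      exact ⟨a, (mem_inter.1 ha).1, .inl (mem_inter.1 ha).2⟩
  obtain ⟨b, hbv, hby⟩ : ∃ b ∉ v, b ∉ y ∨ #(v ∩ y) + 3 ≤ k := by
    by_cases h : #(v ∩ y) + 3 ≤ k
    · obtain ⟨b, -, hb⟩ := exists_mem_notMem_of_card_lt_card (t := univ) (s := v)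
        (by rw [card_univ]; omega)
      exact ⟨b, hb, .inr h⟩
    · have := card_union_add_card_inter v y
      obtain ⟨b, -, hb⟩ := exists_mem_notMem_of_card_lt_card (t := univ) (s := v ∪ y)
        (by rw [card_univ]; omega)
      rw [mem_union, not_or] at hb
      exact ⟨b, hb.1, .inl hb.2⟩
  refine ⟨a, ha, b, hbv, ?_, ?_⟩
  · rcases hax with hax | hax
    · have := card_insert_erase_inter_le ha hbv (.inl hax); omega
    · have := card_insert_erase_inter_le_succ (t := x) ha hbv; omega
  · rcases hby with hby | hby
    · have := card_insert_erase_inter_le ha hbv (.inr hby); omega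
    · have := card_insert_erase_inter_le_succ (t := y) ha hbv; omega

end Finset

namespace SimpleGraph

variable {V : Type*} {G : SimpleGraph V} {x y : V}

theorem isVertexCut_neighborSet_union_sdiff {z : V}
    (hz : z ∉ G.neighborSet x ∪ G.neighborSet y ∪ {x, y}) :
    IsVertexCut G ((G.neighborSet x ∪ G.neighborSet y) \ {x, y}) := by
  intro h
  obtain ⟨p⟩ := h ⟨x, by simp⟩ ⟨z, fun hzS => hz (.inl hzS.1)⟩
  obtain ⟨d, -, hfst, hsnd⟩ := p.exists_boundary_dart {w | w.1 ∈ ({x, y} : Set V)}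
    (by simp) (fun h => hz (.inr h))
  have hadj : G.Adj d.fst.1 d.snd.1 := d.adj
  refine d.snd.2 ⟨?_, hsnd⟩
  rcases hfst with hx | hy
  · rw [hx] at hadj
    exact .inl hadj
  · rw [hy] at hadj
    exact .inr hadj

theorem exists_adj_induce_compl_neighborSet_union_sdiff (hxy : G.Adj x y)
    (hfar : ∀ v ∉ G.neighborSet x ∪ G.neighborSet y ∪ {x, y},
      ∃ w ∉ G.neighborSet x ∪ G.neighborSet y ∪ {x, y}, G.Adj v w)
    (v : ↥((G.neighborSet x ∪ G.neighborSet y) \ {x, y})ᶜ) :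
    ∃ w : ↥((G.neighborSet x ∪ G.neighborSet y) \ {x, y})ᶜ,
      (G.induce ((G.neighborSet x ∪ G.neighborSet y) \ {x, y})ᶜ).Adj v w := by
  obtain ⟨v, hv⟩ := v
  by_cases hvxy : v ∈ ({x, y} : Set V)
  · rcases hvxy with rfl | rfl
    · exact ⟨⟨y, by simp⟩, hxy⟩
    · exact ⟨⟨x, by simp⟩, hxy.symm⟩
  · obtain ⟨w, hw, hvw⟩ := hfar v (fun h => h.elim (fun h => hv ⟨h, hvxy⟩) hvxy)
    exact ⟨⟨w, fun hwS => hw (.inl hwS.1)⟩, hvw⟩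

theorem isSuperVertexCut_neighborSet_union_sdiff (hxy : G.Adj x y) {z : V}
    (hz : z ∉ G.neighborSet x ∪ G.neighborSet y ∪ {x, y})
    (hfar : ∀ v ∉ G.neighborSet x ∪ G.neighborSet y ∪ {x, y},
      ∃ w ∉ G.neighborSet x ∪ G.neighborSet y ∪ {x, y}, G.Adj v w) :
    IsSuperVertexCut G ((G.neighborSet x ∪ G.neighborSet y) \ {x, y}) :=
  ⟨isVertexCut_neighborSet_union_sdiff hz,
    exists_adj_induce_compl_neighborSet_union_sdiff hxy hfar⟩

theorem Adj.ncard_neighborSet_union_sdiff_add [Finite V] (hxy : G.Adj x y) :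
    ((G.neighborSet x ∪ G.neighborSet y) \ {x, y}).ncard +
        (G.neighborSet x ∩ G.neighborSet y).ncard + 2 =
      (G.neighborSet x).ncard + (G.neighborSet y).ncard := by
  have hsub : ({x, y} : Set V) ⊆ G.neighborSet x ∪ G.neighborSet y := by
    rintro v (rfl | rfl)
    · exact .inr hxy.symm
    · exact .inl hxy
  rw [← Set.ncard_pair hxy.ne, add_assoc, add_comm (Set.ncard _) (Set.ncard _), ← add_assoc,
    Set.ncard_sdiff_add_ncard_of_subset hsub, Set.ncard_union_add_ncard_inter]

end SimpleGraph

section Johnson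

variable {n k : ℕ}

theorem johnsonGraph_adj_iff_mem_exchanges {u v : JV n k} :
    (johnsonGraph n k).Adj u v ↔ v.1 ∈ u.1.exchanges := by
  rw [mem_exchanges_iff (by rw [u.2, v.2]), u.2, Ne, ← Subtype.ext_iff]
  rfl

theorem johnsonGraph_eq_or_adj_iff {u v : JV n k} :
    u = v ∨ (johnsonGraph n k).Adj u v ↔ k ≤ #(u.1 ∩ v.1) + 1 := by
  have hle : #(u.1 ∩ v.1) ≤ k := (card_le_card inter_subset_left).trans_eq u.2
  constructor
  · rintro (rfl | h)
    · rw [inter_self, u.2]; omega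
    · rw [h.2]; omega
  · intro h
    by_cases huv : u = v
    · exact .inl huv
    · have hne : #(u.1 ∩ v.1) ≠ k := fun hk => huv <| Subtype.ext <|
        eq_of_subset_of_card_le
          (inter_eq_left.1 (eq_of_subset_of_card_le inter_subset_left (by rw [hk, u.2])))
          (by rw [u.2, v.2])
      exact .inr ⟨huv, by omega⟩

theorem johnsonGraph_notMem_neighborSet_union_iff {x y v : JV n k} :
    v ∉ (johnsonGraph n k).neighborSet x ∪ (johnsonGraph n k).neighborSet y ∪ {x, y} ↔
      #(v.1 ∩ x.1) + 2 ≤ k ∧ #(v.1 ∩ y.1) + 2 ≤ k := by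
  have hfar (u : JV n k) :
      ¬(v = u ∨ (johnsonGraph n k).Adj u v) ↔ #(v.1 ∩ u.1) + 2 ≤ k := by
    rw [(johnsonGraph n k).adj_comm, johnsonGraph_eq_or_adj_iff]
    omega
  rw [← hfar, ← hfar]
  simp only [Set.mem_union, mem_neighborSet, Set.mem_insert_iff, Set.mem_singleton_iff]
  tauto

theorem image_val_johnsonGraph_neighborSet (u : JV n k) :
    Subtype.val '' (johnsonGraph n k).neighborSet u = ↑u.1.exchanges := by
  ext t
  constructor
  · rintro ⟨v, hv, rfl⟩
    exact johnsonGraph_adj_iff_mem_exchanges.1 hv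
  · intro ht
    have htk : #t = k := (card_of_mem_exchanges ht).trans u.2
    exact ⟨⟨t, htk⟩, johnsonGraph_adj_iff_mem_exchanges.2 ht, rfl⟩

theorem ncard_johnsonGraph_neighborSet (u : JV n k) :
    ((johnsonGraph n k).neighborSet u).ncard = k * (n - k) := by
  rw [← Set.ncard_image_of_injective _ Subtype.val_injective,
    image_val_johnsonGraph_neighborSet, Set.ncard_coe_finset, card_exchanges, u.2,
    Fintype.card_fin]

theorem ncard_johnsonGraph_neighborSet_inter {x y : JV n k} (hxy : (johnsonGraph n k).Adj x y) :
    ((johnsonGraph n k).neighborSet x ∩ (johnsonGraph n k).neighborSet y).ncard = n - 2 := by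
  obtain ⟨a, ha, b, hb, hy⟩ := mem_exchanges.1 (johnsonGraph_adj_iff_mem_exchanges.1 hxy)
  rw [← Set.ncard_image_of_injective _ Subtype.val_injective,
    Set.image_inter Subtype.val_injective, image_val_johnsonGraph_neighborSet,
    image_val_johnsonGraph_neighborSet, ← coe_inter, Set.ncard_coe_finset, ← hy,
    card_exchanges_inter_exchanges ha hb, Fintype.card_fin]

theorem ncard_johnsonGraph_neighborSet_union_sdiff (hk : 1 ≤ k) (hn : k + 1 ≤ n) {x y : JV n k}
    (hxy : (johnsonGraph n k).Adj x y) :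
    (((johnsonGraph n k).neighborSet x ∪ (johnsonGraph n k).neighborSet y) \ {x, y}).ncard =
      (2 * k - 1) * (n - k) - k := by
  have hcount := hxy.ncard_neighborSet_union_sdiff_add
  rw [ncard_johnsonGraph_neighborSet, ncard_johnsonGraph_neighborSet,
    ncard_johnsonGraph_neighborSet_inter hxy] at hcount
  have hsplit : (2 * k - 1) * (n - k) + (n - k) = 2 * (k * (n - k)) := by
    rw [← add_one_mul, Nat.sub_add_cancel (by omega), mul_assoc]
  have hk' : k ≤ k * (n - k) := Nat.le_mul_of_pos_right k (by omega)
  omega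

theorem exists_notMem_johnsonGraph_neighborSet_union (hk : 2 ≤ k) (hn : k + 3 ≤ n)
    {x y : JV n k} (hxy : (johnsonGraph n k).Adj x y) :
    ∃ z, z ∉ (johnsonGraph n k).neighborSet x ∪ (johnsonGraph n k).neighborSet y ∪
      {x, y} := by
  have hunion : #(x.1 ∪ y.1) = k + 1 := by
    have := card_union_add_card_inter x.1 y.1
    rw [x.2, y.2, hxy.2] at this
    omega
  obtain ⟨z, hz, hzxy⟩ := exists_card_eq_card_inter_add_le (u := x.1 ∪ y.1) (m := 2)
    hk (by simp; omega) (by simp; omega)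
  have hzx : #(z ∩ x.1) ≤ #(z ∩ (x.1 ∪ y.1)) :=
    card_le_card (inter_subset_inter_left subset_union_left)
  have hzy : #(z ∩ y.1) ≤ #(z ∩ (x.1 ∪ y.1)) :=
    card_le_card (inter_subset_inter_left subset_union_right)
  exact ⟨⟨z, hz⟩, johnsonGraph_notMem_neighborSet_union_iff.2
    ⟨(by omega : #(z ∩ x.1) + 2 ≤ k), (by omega : #(z ∩ y.1) + 2 ≤ k)⟩⟩

theorem exists_adj_notMem_johnsonGraph_neighborSet_union (hk : 3 ≤ k) (hn : k + 3 ≤ n)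
    {x y v : JV n k}
    (hv : v ∉ (johnsonGraph n k).neighborSet x ∪ (johnsonGraph n k).neighborSet y ∪ {x, y}) :
    ∃ w ∉ (johnsonGraph n k).neighborSet x ∪ (johnsonGraph n k).neighborSet y ∪ {x, y},
      (johnsonGraph n k).Adj v w := by
  obtain ⟨hvx, hvy⟩ := johnsonGraph_notMem_neighborSet_union_iff.1 hv
  obtain ⟨a, ha, b, hb, hx, hy⟩ :=
    exists_insert_erase_card_inter_add_le v.2 y.2 hk (by simpa using hn) hvx hvy
  exact ⟨⟨_, (card_insert_erase ha hb).trans v.2⟩,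
    johnsonGraph_notMem_neighborSet_union_iff.2 ⟨hx, hy⟩,
    johnsonGraph_adj_iff_mem_exchanges.2 (mem_exchanges.2 ⟨a, ha, b, hb, rfl⟩)⟩

end Johnson

/-- For `k ≥ 3`, `n ≥ k+3` and adjacent vertices `x, y` of `J(n,k)`, the set of
all neighbours of `x` or `y` other than `x` and `y` has size `(2k-1)(n-k) - k`
and is a super vertex-cut. -/
theorem neighbors_of_edge_superVertexCut (n k : ℕ) (hk : 3 ≤ k) (hn : k + 3 ≤ n)
    (x y : JV n k) (hxy : (johnsonGraph n k).Adj x y) :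
    (((johnsonGraph n k).neighborSet x ∪ (johnsonGraph n k).neighborSet y) \
        ({x, y} : Set (JV n k))).ncard = (2 * k - 1) * (n - k) - k ∧
    IsSuperVertexCut (johnsonGraph n k)
      (((johnsonGraph n k).neighborSet x ∪ (johnsonGraph n k).neighborSet y) \
        ({x, y} : Set (JV n k))) := by
  obtain ⟨z, hz⟩ := exists_notMem_johnsonGraph_neighborSet_union (by omega) hn hxy
  exact ⟨ncard_johnsonGraph_neighborSet_union_sdiff (by omega) (by omega) hxy,
    isSuperVertexCut_neighborSet_union_sdiff hxy hz fun _ hv =>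
      exists_adj_notMem_johnsonGraph_neighborSet_union hk hn hv⟩
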